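/- arXiv:2511.03082 — 4 statements merged into one kernel-verified Lean document; each statement's English description precedes it below -/
import Mathlib

section
/- For all natural numbers n and 1 ≤ k ≤ n-1, P_n(x) = (1+x^2)^k · P_{n-k}(x) + (1-x)·Σ_{j=0}^{k-1} B(n-j-1,0)·(1+x^2)^j·x^{n-j}, where P_n is the Pascalian polynomial and B(m,0) = C(m, ⌊m/2⌋). -/
open Polynomial

def B (n k : ℕ) : ℕ := Nat.choose n ((n - k) / 2)

noncomputable def P (n : ℕ) : Polynomial ℤ :=
  ∑ k ∈ Finset.range (n + 1), C ((B n k : ℤ)) * X ^ (n - k)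

/-!
Reindexing by `i = n - k` gives `P n = ∑_{i ≤ n} C(n, ⌊i/2⌋) X^i`. Pascal's rule applied to the
coefficients of degree `≥ 2` yields the one-step recursion
`P (n+1) = (1 + X²) P n + (1 - X) C(n, ⌊n/2⌋) X^(n+1)`, where the boundary terms combine because
`C(n, ⌊(n+1)/2⌋) = C(n, ⌊n/2⌋)`. Iterating it `k` times gives the theorem.
-/

noncomputable def pascalPartial (n N : ℕ) : ℤ[X] :=
  ∑ i ∈ Finset.range N, C (n.choose (i / 2) : ℤ) * X ^ i

lemma P_eq_pascalPartial (n : ℕ) : P n = pascalPartial n (n + 1) := by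
  rw [P, pascalPartial, ← Finset.sum_range_reflect]
  refine Finset.sum_congr rfl fun i hi => ?_
  rw [Finset.mem_range] at hi
  rw [B, show n + 1 - 1 - i = n - i by omega, Nat.sub_sub_self (by omega)]

lemma pascalPartial_succ_add_two (n N : ℕ) :
    pascalPartial (n + 1) (N + 2) = pascalPartial n (N + 2) + X ^ 2 * pascalPartial n N := by
  simp only [pascalPartial, Finset.sum_range_succ' _ (N + 1), Finset.sum_range_succ' _ N,
    Finset.mul_sum]
  have pascal : ∀ i, ((n + 1).choose ((i + 1 + 1) / 2) : ℤ) =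
      n.choose ((i + 1 + 1) / 2) + n.choose (i / 2) := by
    intro i
    rw [show (i + 1 + 1) / 2 = i / 2 + 1 by omega, Nat.choose_succ_succ']
    push_cast
    ring
  have shift : ∀ i, C (n.choose (i / 2) : ℤ) * X ^ (i + 1 + 1) =
      X ^ 2 * (C (n.choose (i / 2) : ℤ) * X ^ i) := fun i => by ring
  simp only [pascal, C_add, add_mul, Finset.sum_add_distrib, shift, zero_add, Nat.reduceDiv,
    Nat.choose_zero_right]
  ring

lemma choose_succ_div_two (n : ℕ) : n.choose ((n + 1) / 2) = n.choose (n / 2) :=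
  Nat.choose_symm_of_eq_add (by omega)

lemma P_succ (n : ℕ) :
    P (n + 1) = (1 + X ^ 2) * P n + (1 - X) * C (B n 0 : ℤ) * X ^ (n + 1) := by
  have hP : P (n + 1) = pascalPartial n (n + 2) + X ^ 2 * pascalPartial n n := by
    rw [P_eq_pascalPartial, pascalPartial_succ_add_two]
  rw [hP, P_eq_pascalPartial, B, Nat.sub_zero]
  simp only [pascalPartial, Finset.sum_range_succ _ (n + 1), Finset.sum_range_succ _ n,
    choose_succ_div_two]
  ring

lemma P_eq_of_le (n k : ℕ) (hk : k ≤ n) :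
    P n = (1 + X ^ 2) ^ k * P (n - k) +
      (1 - X) * ∑ j ∈ Finset.range k,
        C ((B (n - j - 1) 0 : ℤ)) * (1 + X ^ 2) ^ j * X ^ (n - j) := by
  induction k with
  | zero => simp
  | succ k ih =>
    obtain ⟨m, hm⟩ : ∃ m, n - k = m + 1 := ⟨n - k - 1, by omega⟩
    rw [ih (by omega), hm, P_succ, Finset.sum_range_succ, show n - (k + 1) = m by omega,
      show n - k - 1 = m by omega, ← hm]
    ring

theorem pascalian_extended_recursion_general (n k : ℕ) (hk : k ≤ n - 1) :
    P n = (1 + X ^ 2) ^ k * P (n - k) +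
      (1 - X) * ∑ j ∈ Finset.range k,
        C ((B (n - j - 1) 0 : ℤ)) * (1 + X ^ 2) ^ j * X ^ (n - j) :=
  P_eq_of_le n k (by omega)

theorem pascalian_extended_recursion (n k : ℕ) (hk1 : 1 ≤ k) (hk : k ≤ n - 1) :
    P n = (1 + X ^ 2) ^ k * P (n - k) +
      (1 - X) * ∑ j ∈ Finset.range k,
        C ((B (n - j - 1) 0 : ℤ)) * (1 + X ^ 2) ^ j * X ^ (n - j) :=
  pascalian_extended_recursion_general n k hk
end

section
/- For all natural numbers n, P_n(x) + x^{n+1}·R_n(x) = (1+x)·(1+x^2)^n, where P_n(x) = Σ_{k=0}^n B(n,k)·x^{n-k}, R_n(x) = Σ_{k=0}^n B(n,k)·x^k, and B(n,k) = C(n, ⌊(n-k)/2⌋). -/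
open Polynomial

noncomputable def R (n : ℕ) : Polynomial ℤ :=
  ∑ k ∈ Finset.range (n + 1), C ((B n k : ℤ)) * X ^ k

/-!
Both `P n` and `X ^ (n + 1) * R n` have coefficient `n.choose (m / 2)` at `X ^ m`: for `P n` this is
the reflection `k ↦ n - k`, and for the shifted `R n` it is the symmetry of binomial coefficients,
because `(n - k) / 2 + (n + 1 + k) / 2 = n`. The two sums fill the degrees `0, …, 2n + 1` without
overlap, and pairing the degrees `2j, 2j + 1` gives `∑ j, n.choose j * (x ^ (2j) + x ^ (2j + 1))`,
which is `(1 + x) * (1 + x ^ 2) ^ n`.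
-/

open Finset

theorem sum_range_two_mul {M : Type*} [AddCommMonoid M] (f : ℕ → M) (N : ℕ) :
    ∑ m ∈ range (2 * N), f m = ∑ j ∈ range N, (f (2 * j) + f (2 * j + 1)) := by
  induction N with
  | zero => simp
  | succ N ih => rw [mul_add_one, sum_range_succ, sum_range_succ, sum_range_succ, ih, add_assoc]

theorem sum_range_choose_div_two_mul_pow {S : Type*} [CommSemiring S] (x : S) (n : ℕ) :
    ∑ m ∈ range (2 * (n + 1)), (n.choose (m / 2) : S) * x ^ m = (1 + x) * (1 + x ^ 2) ^ n := by
  rw [sum_range_two_mul, add_comm 1 (x ^ 2), add_pow, mul_sum]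
  refine sum_congr rfl fun j _ => ?_
  rw [Nat.mul_div_cancel_left j two_pos, show (2 * j + 1) / 2 = j by omega, pow_succ, ← pow_mul]
  ring

theorem Nat.choose_sub_div_two_eq_choose_add_div_two {n k : ℕ} (h : k ≤ n) :
    n.choose ((n - k) / 2) = n.choose ((n + 1 + k) / 2) := by
  rw [← Nat.choose_symm (by omega : (n + 1 + k) / 2 ≤ n)]
  congr 1
  omega

theorem P_eq_sum (n : ℕ) : P n = ∑ k ∈ range (n + 1), (n.choose (k / 2) : ℤ[X]) * X ^ k := by
  rw [P, ← sum_range_reflect]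
  refine sum_congr rfl fun k hk => ?_
  have hk : k ≤ n := Nat.lt_succ_iff.mp (mem_range.mp hk)
  rw [B, map_natCast, show n + 1 - 1 - k = n - k by omega, Nat.sub_sub_self hk]

theorem X_pow_succ_mul_R (n : ℕ) :
    X ^ (n + 1) * R n =
      ∑ k ∈ range (n + 1), (n.choose ((n + 1 + k) / 2) : ℤ[X]) * X ^ (n + 1 + k) := by
  rw [R, mul_sum]
  refine sum_congr rfl fun k hk => ?_
  rw [B, Nat.choose_sub_div_two_eq_choose_add_div_two (Nat.lt_succ_iff.mp (mem_range.mp hk)),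
    map_natCast, pow_add]
  ring

theorem pascalian_reciprocal_identity (n : ℕ) :
    P n + X ^ (n + 1) * R n = (1 + X) * (1 + X ^ 2) ^ n := by
  rw [P_eq_sum, X_pow_succ_mul_R, ← sum_range_add, ← two_mul]
  exact sum_range_choose_div_two_mul_pow X n
end

section
/- For every odd natural number n = 2m+1, P_n(x) = (1+x)·q_n(x^2) as polynomials, where q_n(x) = Σ_{k=0}^{⌊n/2⌋} C(n,k)·x^k and P_n(x) = Σ_{k=0}^n B(n,k)·x^{n-k} with B(n,k) = C(n, ⌊(n-k)/2⌋). -/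
open Polynomial

noncomputable def q (n : ℕ) : Polynomial ℤ :=
  ∑ k ∈ Finset.range (n / 2 + 1), C ((Nat.choose n k : ℤ)) * X ^ k

/- Reading the coefficients of `P n` from the constant term up, the coefficient of `X ^ j` is
`C(n, ⌊j/2⌋)`; for odd `n` these come in equal pairs `X ^ (2i), X ^ (2i+1)`, which factor as
`(1 + X) X ^ (2i)`, and the remaining sum is `q n` evaluated at `X ^ 2`. -/

theorem P_eq_sum_choose_div_two (n : ℕ) :
    P n = ∑ j ∈ Finset.range (n + 1), C (n.choose (j / 2) : ℤ) * X ^ j := by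
  rw [P, ← Finset.sum_range_reflect]
  refine Finset.sum_congr rfl fun k hk => ?_
  rw [Finset.mem_range] at hk
  rw [B, show n - (n + 1 - 1 - k) = k by omega]

theorem q_comp_X_sq (n : ℕ) :
    (q n).comp (X ^ 2) =
      ∑ i ∈ Finset.range (n / 2 + 1), C (n.choose i : ℤ) * X ^ (2 * i) := by
  simp only [q, sum_comp, mul_comp, C_comp, X_pow_comp, ← pow_mul]

theorem sum_range_two_mul_div_two {R : Type*} [CommSemiring R] (a : ℕ → R) (m : ℕ) :
    ∑ j ∈ Finset.range (2 * m), C (a (j / 2)) * X ^ j =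
      (1 + X) * ∑ i ∈ Finset.range m, C (a i) * X ^ (2 * i) := by
  induction m with
  | zero => simp
  | succ m ih =>
    rw [Nat.mul_succ, Finset.sum_range_succ, Finset.sum_range_succ, ih, Finset.sum_range_succ,
      show (2 * m + 1) / 2 = m by omega, Nat.mul_div_cancel_left m two_pos]
    ring

theorem pascalian_odd_factorization (n m : ℕ) (h : n = 2 * m + 1) :
    P n = (1 + X) * (q n).comp (X ^ 2) := by
  rw [P_eq_sum_choose_div_two, q_comp_X_sq, h, show 2 * m + 1 + 1 = 2 * (m + 1) by ring,
    show (2 * m + 1) / 2 = m by omega]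
  exact sum_range_two_mul_div_two (fun i => ((2 * m + 1).choose i : ℤ)) (m + 1)
end

section
/- For every odd natural number n, -1 is a root of the Pascalian polynomial P_n, and for every even natural number n, P_n(-1) = C(n, n/2). -/
open Polynomial

/-!
Reversing the order of summation, `P n (-1) = ∑_{j ≤ n} (-1)^j C(n, ⌊j/2⌋)`. The terms with
`j = 2t` and `j = 2t + 1` carry the same binomial coefficient and opposite signs, so they cancel;
when `n` is even the last term `C(n, n/2)` is left without a partner.
-/

open Finset

theorem sum_range_two_mul_neg_one_pow_mul_div_two {R : Type*} [Ring R] (f : ℕ → R) (t : ℕ) :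
    ∑ j ∈ range (2 * t), (-1) ^ j * f (j / 2) = 0 := by
  induction t with
  | zero => simp
  | succ t ih =>
    have hodd : (2 * t + 1) / 2 = t := by omega
    rw [mul_add_one, sum_range_succ, sum_range_succ, ih, pow_succ, pow_mul, hodd,
      Nat.mul_div_cancel_left t two_pos]
    simp

theorem eval_neg_one_P (n : ℕ) :
    (P n).eval (-1) = ∑ j ∈ range (n + 1), (-1) ^ j * (n.choose (j / 2) : ℤ) := by
  rw [P, eval_finsetSum, ← sum_range_reflect]
  refine sum_congr rfl fun k hk => ?_
  have hreflect : n - (n + 1 - 1 - k) = k := by rw [mem_range] at hk; omega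
  simp only [eval_mul, eval_C, eval_pow, eval_X, B, hreflect, mul_comm]

theorem pascalian_trivial_root (n : ℕ) :
    (Odd n → (P n).eval (-1) = 0) ∧ (Even n → (P n).eval (-1) = Nat.choose n (n / 2)) := by
  rw [eval_neg_one_P]
  constructor
  · rintro ⟨t, rfl⟩
    rw [show 2 * t + 1 + 1 = 2 * (t + 1) by omega]
    exact sum_range_two_mul_neg_one_pow_mul_div_two (fun i => ((2 * t + 1).choose i : ℤ)) _
  · rintro ⟨t, rfl⟩
    rw [← two_mul, sum_range_succ,
      sum_range_two_mul_neg_one_pow_mul_div_two (fun i => ((2 * t).choose i : ℤ)), pow_mul,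
      Nat.mul_div_cancel_left t two_pos]
    simp
end
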